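/- arXiv:2205.05075 — 6 statements merged into one kernel-verified Lean document; each statement's English description precedes it below -/
import Mathlib

section
/- Any connected graph H on n vertices (n ≥ 2) contains an induced subgraph with at least (1/2)·√(log₂ n) vertices which is either a complete graph, a star, or a path. -/
open SimpleGraph

/-- A graph is a star graph if there is a center adjacent to all other
vertices, and there are no other edges. -/
def IsStarGraph {α : Type*} (G : SimpleGraph α) : Prop :=
  ∃ c : α, ∀ u v : α, G.Adj u v ↔ ((u = c ∨ v = c) ∧ u ≠ v)

/-- A graph is a path graph if it is isomorphic to `SimpleGraph.pathGraph k` for some `k`. -/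
def IsPathGraph {α : Type*} (G : SimpleGraph α) : Prop :=
  ∃ k : ℕ, Nonempty (G ≃g SimpleGraph.pathGraph k)

/-!
Let `k = ⌈√(log₂ n) / 2⌉`. Shortest walks are induced paths, so if two vertices are at distance
at least `k - 1` there is an induced path on `k` vertices. If some vertex has degree at least
`4 ^ k`, the bound `R(k, k) ≤ 4 ^ k` applied to its neighbourhood gives a `k`-clique, or an
independent `k`-set which spans a star together with that vertex. Otherwise the maximum degree is
below `4 ^ k` and every vertex is within distance `k - 2` of a fixed one, so
`n ≤ 4 ^ (k (k - 2)) < n`.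
-/

open Finset

namespace SimpleGraph

variable {V : Type*} {G : SimpleGraph V} {u v w : V}

lemma Walk.dist_getVert_of_length_eq_dist (p : G.Walk u v) (hp : p.length = G.dist u v)
    {i : ℕ} (hi : i ≤ p.length) : G.dist u (p.getVert i) = i := by
  have hle : G.dist u (p.getVert i) ≤ i := by
    simpa [hi] using dist_le (p.take i)
  have htail : G.dist (p.getVert i) v ≤ p.length - i := by
    simpa using dist_le (p.drop i)
  have := (p.take i).reachable.dist_triangle_left v
  omega

def Walk.pathGraphEmbedding (p : G.Walk u v) (hp : p.length = G.dist u v) (k : ℕ)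
    (hk : k ≤ p.length + 1) : pathGraph k ↪g G where
  toFun i := p.getVert i
  inj' i j (hij : p.getVert i = p.getVert j) := by
    have hi := p.dist_getVert_of_length_eq_dist hp (i := i) (by omega)
    have hj := p.dist_getVert_of_length_eq_dist hp (i := j) (by omega)
    exact Fin.ext (hi.symm.trans (hij ▸ hj))
  map_rel_iff' {i j} := by
    have hi := p.dist_getVert_of_length_eq_dist hp (i := i) (by omega)
    have hj := p.dist_getVert_of_length_eq_dist hp (i := j) (by omega)
    change G.Adj (p.getVert i) (p.getVert j) ↔ _
    rw [pathGraph_adj]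
    constructor
    · intro hadj
      have hne : (i : ℕ) ≠ j := fun h => hadj.ne (by rw [h])
      have := hadj.diff_dist_adj (u := u)
      omega
    · rintro (h | h)
      · simpa [h] using p.adj_getVert_succ (i := i) (by omega)
      · simpa [h] using (p.adj_getVert_succ (i := j) (by omega)).symm

lemma exists_isPathGraph_induce_of_le_dist_add_one (huv : G.Reachable u v) {k : ℕ}
    (hk : k ≤ G.dist u v + 1) : ∃ S : Finset V, #S = k ∧ IsPathGraph (G.induce (S : Set V)) := by
  obtain ⟨p, hp⟩ := huv.exists_walk_length_eq_dist
  let f := p.pathGraphEmbedding hp k (hp ▸ hk)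
  refine ⟨univ.map f.toEmbedding, by simp, k, ⟨?_⟩⟩
  rw [coe_map, coe_univ, Set.image_univ]
  exact f.isoInduceRange.symm

lemma exists_isClique_insert_of_subset_filter_adj [DecidableEq V] [DecidableRel G.Adj]
    {A B : Finset V} (hv : v ∈ A) (hB : B ⊆ (A.erase v).filter (G.Adj v))
    (hc : G.IsClique (B : Set V)) :
    ∃ C ⊆ A, #C = #B + 1 ∧ G.IsClique (C : Set V) := by
  have hBA : ∀ x ∈ B, x ∈ A.erase v ∧ G.Adj v x := fun x hx => mem_filter.mp (hB hx)
  refine ⟨insert v B, insert_subset hv fun x hx => mem_of_mem_erase (hBA x hx).1,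
    card_insert_of_notMem fun hvB => (hBA v hvB).1 |> notMem_erase v A, ?_⟩
  rw [coe_insert, isClique_insert]
  exact ⟨hc, fun x hx _ => (hBA x hx).2⟩

theorem exists_isClique_or_isIndepSet_of_two_pow_le [DecidableEq V] (G : SimpleGraph V)
    [DecidableRel G.Adj] :
    ∀ {s t : ℕ} {A : Finset V}, 2 ^ (s + t) ≤ #A →
      (∃ B ⊆ A, #B = s ∧ G.IsClique (B : Set V)) ∨ (∃ B ⊆ A, #B = t ∧ G.IsIndepSet (B : Set V))
  | 0, _, _, _ => .inl ⟨∅, empty_subset _, rfl, by simp⟩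
  | _, 0, _, _ => .inr ⟨∅, empty_subset _, rfl, by simp⟩
  | s + 1, t + 1, A, hA => by
    obtain ⟨v, hv⟩ : A.Nonempty := card_pos.mp (lt_of_lt_of_le (by positivity) hA)
    set N := (A.erase v).filter (G.Adj v ·)
    set M := (A.erase v).filter (Gᶜ.Adj v ·)
    have hNM : #N + #M + 1 = #A := by
      rw [← card_erase_add_one hv,
        ← card_filter_add_card_filter_not (s := A.erase v) (G.Adj v ·)]
      congr 3
      refine filter_congr fun x hx => ?_
      simp [(ne_of_mem_erase hx).symm]
    have hpow : 2 ^ (s + 1 + (t + 1)) = 2 ^ (s + (t + 1)) + 2 ^ (s + 1 + t) := by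
      rw [show s + 1 + (t + 1) = s + t + 1 + 1 by omega, pow_succ]; ring_nf
    rcases le_or_gt (2 ^ (s + (t + 1))) #N with hN | hN
    · rcases exists_isClique_or_isIndepSet_of_two_pow_le G hN with
        ⟨B, hBN, hB, hc⟩ | ⟨B, hBN, hB, hi⟩
      · obtain ⟨C, hCA, hC, hc⟩ := exists_isClique_insert_of_subset_filter_adj hv hBN hc
        exact .inl ⟨C, hCA, hB ▸ hC, hc⟩
      · exact .inr ⟨B, hBN.trans ((filter_subset _ _).trans (erase_subset _ _)), hB, hi⟩
    · have hM : 2 ^ (s + 1 + t) ≤ #M := by omega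
      rcases exists_isClique_or_isIndepSet_of_two_pow_le G hM with
        ⟨B, hBM, hB, hc⟩ | ⟨B, hBM, hB, hi⟩
      · exact .inl ⟨B, hBM.trans ((filter_subset _ _).trans (erase_subset _ _)), hB, hc⟩
      · obtain ⟨C, hCA, hC, hc⟩ :=
          exists_isClique_insert_of_subset_filter_adj hv hBM ((isClique_compl G).mpr hi)
        exact .inr ⟨C, hCA, hB ▸ hC, (isClique_compl G).mp hc⟩

lemma exists_adj_of_dist_eq_add_one {r : ℕ} (h : G.dist u w = r + 1) :
    ∃ x, G.dist u x = r ∧ G.Adj x w := by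
  obtain ⟨p, hp⟩ := exists_walk_of_dist_ne_zero (by omega : G.dist u w ≠ 0)
  refine ⟨p.getVert r, p.dist_getVert_of_length_eq_dist hp (by omega), ?_⟩
  simpa [show r + 1 = p.length by omega] using p.adj_getVert_succ (i := r) (by omega)

lemma card_filter_dist_le_le_pow [Fintype V] [DecidableEq V] [DecidableRel G.Adj]
    (hG : G.Connected) {D : ℕ} (hdeg : ∀ x, G.degree x ≤ D) (v : V) (r : ℕ) :
    #{w | G.dist v w ≤ r} ≤ (D + 1) ^ r := by
  induction r with
  | zero =>
    simpa [hG.dist_eq_zero_iff, eq_comm] using card_le_one.mpr fun a ha b hb => by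
      simp_all
  | succ r ih =>
    have hsub : ({w | G.dist v w ≤ r + 1} : Finset V) ⊆
        ({w | G.dist v w ≤ r} : Finset V).biUnion fun x => insert x (G.neighborFinset x) := by
      intro w hw
      simp only [mem_filter, mem_univ, true_and] at hw
      rcases le_or_gt (G.dist v w) r with hr | hr
      · exact mem_biUnion.mpr ⟨w, by simpa using hr, mem_insert_self _ _⟩
      · obtain ⟨x, hx, hxw⟩ := exists_adj_of_dist_eq_add_one (show G.dist v w = r + 1 by omega)
        exact mem_biUnion.mpr ⟨x, by simpa using hx.le, by simpa using .inr hxw⟩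
    calc #{w | G.dist v w ≤ r + 1}
        ≤ #({w | G.dist v w ≤ r} : Finset V) * (D + 1) := by
          refine (card_le_card hsub).trans (card_biUnion_le_card_mul _ _ _ fun x _ => ?_)
          exact (card_insert_le _ _).trans (by simpa using hdeg x)
      _ ≤ (D + 1) ^ (r + 1) := by rw [pow_succ]; gcongr

lemma isStarGraph_induce_insert {B : Finset V} [DecidableEq V] (hB : ∀ x ∈ B, G.Adj v x)
    (hind : G.IsIndepSet (B : Set V)) :
    IsStarGraph (G.induce ((insert v B : Finset V) : Set V)) := by
  refine ⟨⟨v, by simp⟩, ?_⟩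
  rintro ⟨a, ha⟩ ⟨b, hb⟩
  have hvB : v ∉ B := fun h => G.irrefl (hB v h)
  simp only [coe_insert, Set.mem_insert_iff, mem_coe] at ha hb
  simp only [comap_adj, Function.Embedding.subtype_apply, Subtype.mk.injEq, ne_eq]
  obtain rfl | haB := ha
  · obtain rfl | hbB := hb
    · simp
    · simpa [hB b hbB] using (hB b hbB).ne
  obtain rfl | hbB := hb
  · simpa [(hB a haB).symm] using (hB a haB).ne.symm
  have hav : a ≠ v := fun h => hvB (h ▸ haB)
  have hbv : b ≠ v := fun h => hvB (h ▸ hbB)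
  simp only [hav, hbv, or_self, false_and, iff_false]
  exact fun hab => hind haB hbB hab.ne hab

theorem exists_induce_eq_top_or_isStarGraph_or_isPathGraph_or_card_le [Fintype V]
    (hG : G.Connected) (k : ℕ) :
    (∃ S : Finset V, k ≤ #S ∧ (G.induce (S : Set V) = ⊤ ∨ IsStarGraph (G.induce (S : Set V)) ∨
      IsPathGraph (G.induce (S : Set V)))) ∨ Fintype.card V ≤ 4 ^ (k * (k - 2)) := by
  classical
  by_cases hdist : ∃ u v, k ≤ G.dist u v + 1
  · obtain ⟨u, v, huv⟩ := hdist
    obtain ⟨S, hS, hpath⟩ := exists_isPathGraph_induce_of_le_dist_add_one (hG u v) huv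
    exact .inl ⟨S, hS.ge, .inr (.inr hpath)⟩
  push Not at hdist
  by_cases hdeg : ∃ w, 4 ^ k ≤ G.degree w
  · obtain ⟨w, hw⟩ := hdeg
    have hA : 2 ^ (k + k) ≤ #(G.neighborFinset w) := by
      rwa [card_neighborFinset_eq_degree, ← two_mul, pow_mul]
    rcases exists_isClique_or_isIndepSet_of_two_pow_le G hA with
      ⟨B, -, hB, hclique⟩ | ⟨B, hBw, hB, hind⟩
    · exact .inl ⟨B, hB.ge, .inl (induce_eq_top.mpr hclique)⟩
    · refine .inl ⟨insert w B, hB ▸ card_le_card (subset_insert _ _), .inr (.inl ?_)⟩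
      exact isStarGraph_induce_insert (fun x hx => (mem_neighborFinset _ _ _).mp (hBw hx)) hind
  push Not at hdeg
  obtain ⟨v⟩ := hG.nonempty
  have h4k : 1 ≤ 4 ^ k := Nat.one_le_pow _ _ (by norm_num)
  have hball := card_filter_dist_le_le_pow hG (D := 4 ^ k - 1)
    (fun x => Nat.le_sub_one_of_lt (hdeg x)) v (k - 2)
  rw [filter_true_of_mem fun w _ => by have := hdist v w; omega, card_univ,
    Nat.sub_add_cancel h4k, ← pow_mul] at hball
  exact .inr hball

end SimpleGraph

open Real in
lemma four_pow_mul_sub_two_lt {n k : ℕ} (hn : 2 ≤ n) (hk : (k : ℝ) < 1 / 2 * √(logb 2 n) + 1) :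
    4 ^ (k * (k - 2)) < n := by
  rcases lt_or_ge k 2 with hk2 | hk2
  · interval_cases k <;> simp <;> omega
  set L := logb 2 n
  have hL : 0 ≤ L := logb_nonneg one_lt_two (by exact_mod_cast (by omega : 1 ≤ n))
  have hsq : ((k : ℝ) - 1) ^ 2 < L / 4 := by
    have hk1 : (0 : ℝ) ≤ k - 1 := by
      have : (2 : ℝ) ≤ k := by exact_mod_cast hk2
      linarith
    calc ((k : ℝ) - 1) ^ 2 < (1 / 2 * √L) ^ 2 := pow_lt_pow_left₀ (by linarith) hk1 two_ne_zero
      _ = L / 4 := by rw [mul_pow, sq_sqrt hL]; ring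
  have hexp : ((2 * (k * (k - 2)) : ℕ) : ℝ) < L := by
    push_cast [Nat.cast_sub hk2]
    nlinarith
  rw [lt_logb_iff_rpow_lt one_lt_two (by positivity), rpow_natCast] at hexp
  rw [show 4 = 2 ^ 2 by rfl, ← pow_mul]
  exact_mod_cast hexp

/-- Any connected graph on `n ≥ 2` vertices contains an induced subgraph on at least
`(1/2)·√(log₂ n)` vertices which is a complete graph, a star, or a path. -/
theorem stmt0 (n : ℕ) (hn : 2 ≤ n) (H : SimpleGraph (Fin n)) (hH : H.Connected) :
    ∃ S : Finset (Fin n),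
      (1 / 2) * Real.sqrt (Real.logb 2 n) ≤ (S.card : ℝ) ∧
      (H.induce (S : Set (Fin n)) = ⊤ ∨
        IsStarGraph (H.induce (S : Set (Fin n))) ∨
        IsPathGraph (H.induce (S : Set (Fin n)))) := by
  set k := ⌈1 / 2 * Real.sqrt (Real.logb 2 n)⌉₊
  rcases exists_induce_eq_top_or_isStarGraph_or_isPathGraph_or_card_le hH k with
    ⟨S, hS, hshape⟩ | hcard
  · exact ⟨S, (Nat.le_ceil _).trans (by exact_mod_cast hS), hshape⟩
  · have := four_pow_mul_sub_two_lt (k := k) hn (Nat.ceil_lt_add_one (by positivity))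
    rw [Fintype.card_fin] at hcard
    omega
end

section
/- Let T be a tree, S ⊆ V(T) a set of vertices such that the induced subgraph T[S] is a tree, and T' another tree with vertex set S. Then the graph with vertex set V(T) and edge set (E(T) \ E(T[S])) ∪ E(T') is again a tree. -/
/-!
Let `G₀` be `T` with the edges inside `S` deleted, so that `R = G₀ ⊔ T'`. Since `T` is a tree and
`T[S]` is connected, each component of `G₀` meets `S` in exactly one vertex (two such vertices
would be joined in `T` both by a path of `G₀` and by a path of `T[S]`), which gives a retraction
`π : V → S` constant on the components of `G₀`. Every edge of `R` is a bridge: for an edge of `G₀`,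
a walk in `R` avoiding it becomes a walk in `T` avoiding it once the edges of `T'` are rerouted
through `T[S]`; for an edge of `T'`, applying `π` to a walk in `R` avoiding it gives a walk in
`T'[S]` avoiding it.
-/

open SimpleGraph

namespace SimpleGraph

variable {V W : Type*} {G H : SimpleGraph V} {S : Set V}

theorem deleteEdges_sym2_adj {u v : V} :
    (G.deleteEdges S.sym2).Adj u v ↔ G.Adj u v ∧ ¬(u ∈ S ∧ v ∈ S) := by
  rw [deleteEdges_adj, Set.mk_mem_sym2_iff]

theorem Reachable.map_of_adj {G' : SimpleGraph W} (f : V → W)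
    (hf : ∀ a b, G.Adj a b → G'.Reachable (f a) (f b)) {u v : V} (h : G.Reachable u v) :
    G'.Reachable (f u) (f v) := by
  obtain ⟨p⟩ := h
  induction p with
  | nil => rfl
  | cons hadj _ ih => exact (hf _ _ hadj).trans ih

theorem Preconnected.reachable_of_induce {G' : SimpleGraph V} (hS : (G.induce S).Preconnected)
    (hG : ∀ a b, a ∈ S → b ∈ S → G.Adj a b → G'.Adj a b) {a b : V} (ha : a ∈ S) (hb : b ∈ S) :
    G'.Reachable a b :=
  (hS ⟨a, ha⟩ ⟨b, hb⟩).map ⟨Subtype.val, fun {x y} h => hG x y x.2 y.2 h⟩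

theorem Walk.edges_map_induce_subset_sym2 {u v : S} (p : (G.induce S).Walk u v) :
    ∀ e ∈ (p.map (Embedding.induce S).toHom).edges, e ∈ S.sym2 := by
  intro e he
  obtain ⟨e', -, rfl⟩ := List.mem_map.mp (Walk.edges_map _ _ ▸ he)
  induction e' using Sym2.ind with
  | _ x y => exact ⟨x.2, y.2⟩

theorem IsAcyclic.eq_of_reachable_deleteEdges_sym2 (hG : G.IsAcyclic)
    (hS : (G.induce S).Preconnected) {s t : V} (hs : s ∈ S) (ht : t ∈ S)
    (h : (G.deleteEdges S.sym2).Reachable s t) : s = t := by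
  classical
  obtain ⟨p⟩ := h
  obtain ⟨q⟩ := hS ⟨s, hs⟩ ⟨t, ht⟩
  let p' := p.mapLe (deleteEdges_le _)
  let q' := q.map (Embedding.induce S).toHom
  have hpq : p'.toPath = q'.toPath := (hG.subsingleton_path s t).elim _ _
  have hnil : (p'.toPath : G.Walk s t).edges = [] := by
    refine List.eq_nil_iff_forall_not_mem.mpr fun e he => ?_
    have hp : e ∈ (G.deleteEdges S.sym2).edgeSet := p.edges_subset_edgeSet
      (p.edges_mapLe_eq_edges _ ▸ Walk.edges_toPath_subset_edges p' he)
    rw [edgeSet_deleteEdges] at hp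
    exact hp.2 (q.edges_map_induce_subset_sym2 e (Walk.edges_toPath_subset_edges q' (hpq ▸ he)))
  exact Walk.eq_of_length_eq_zero (by rw [← Walk.length_edges, hnil, List.length_nil])

theorem Walk.exists_mem_reachable_deleteEdges_sym2 {a b : V} (p : G.Walk a b) (hb : b ∈ S) :
    ∃ s ∈ S, (G.deleteEdges S.sym2).Reachable a s := by
  induction p with
  | nil => exact ⟨_, hb, .rfl⟩
  | @cons a c b hac p ih =>
    by_cases ha : a ∈ S
    · exact ⟨a, ha, .rfl⟩
    · obtain ⟨s, hs, hcs⟩ := ih hb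
      exact ⟨s, hs, (deleteEdges_sym2_adj.mpr ⟨hac, fun h => ha h.1⟩).reachable.trans hcs⟩

theorem IsTree.exists_retraction_deleteEdges_sym2 (hG : G.IsTree)
    (hS : (G.induce S).Preconnected) (hS₀ : S.Nonempty) :
    ∃ π : V → S, (∀ s (hs : s ∈ S), π s = ⟨s, hs⟩) ∧
      ∀ a b, (G.deleteEdges S.sym2).Adj a b → π a = π b := by
  obtain ⟨s₀, hs₀⟩ := hS₀
  choose π hπS hπ using fun x =>
    (hG.connected.preconnected x s₀).some.exists_mem_reachable_deleteEdges_sym2 hs₀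
  refine ⟨fun x => ⟨π x, hπS x⟩, fun s hs => Subtype.ext ?_, fun a b hab => Subtype.ext ?_⟩
  · exact hG.isAcyclic.eq_of_reachable_deleteEdges_sym2 hS (hπS s) hs (hπ s).symm
  · exact hG.isAcyclic.eq_of_reachable_deleteEdges_sym2 hS (hπS a) (hπS b)
      ((hπ a).symm.trans (hab.reachable.trans (hπ b)))

theorem not_reachable_deleteEdges_sup_of_deleteEdges_sym2_adj (hG : G.IsAcyclic)
    (hS : (G.induce S).Preconnected) (hHS : ∀ a b, H.Adj a b → a ∈ S ∧ b ∈ S) {u v : V}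
    (huv : (G.deleteEdges S.sym2).Adj u v) :
    ¬((G.deleteEdges S.sym2 ⊔ H).deleteEdges {s(u, v)}).Reachable u v := by
  rw [deleteEdges_sym2_adj] at huv
  refine fun h => isAcyclic_iff_forall_adj_isBridge.mp hG huv.1 (h.map_of_adj id fun a b hab => ?_)
  rw [deleteEdges_adj, sup_adj] at hab
  obtain ⟨hab | hab, hne⟩ := hab
  · exact ((deleteEdges_adj ..).mpr ⟨(deleteEdges_sym2_adj.mp hab).1, hne⟩).reachable
  · obtain ⟨ha, hb⟩ := hHS a b hab
    refine hS.reachable_of_induce (fun x y hx hy hxy => (deleteEdges_adj ..).mpr ⟨hxy, ?_⟩) ha hb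
    intro he
    have huvS : s(u, v) ∈ S.sym2 := Set.mem_singleton_iff.mp he ▸ Set.mk_mem_sym2_iff.mpr ⟨hx, hy⟩
    exact huv.2 huvS

theorem not_reachable_deleteEdges_sup_of_adj (hG : G.IsTree) (hS : (G.induce S).Preconnected)
    (hHS : ∀ a b, H.Adj a b → a ∈ S ∧ b ∈ S) (hH : (H.induce S).IsAcyclic) {u v : V}
    (huv : H.Adj u v) :
    ¬((G.deleteEdges S.sym2 ⊔ H).deleteEdges {s(u, v)}).Reachable u v := by
  obtain ⟨hu, hv⟩ := hHS u v huv
  obtain ⟨π, hπS, hπ⟩ := hG.exists_retraction_deleteEdges_sym2 hS ⟨u, hu⟩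
  intro h
  have hπuv := h.map_of_adj (G' := (H.induce S).deleteEdges {s(⟨u, hu⟩, ⟨v, hv⟩)}) π
    fun a b hab => by
      rw [deleteEdges_adj, sup_adj] at hab
      obtain ⟨hab | hab, hne⟩ := hab
      · rw [hπ a b hab]
      · obtain ⟨ha, hb⟩ := hHS a b hab
        rw [hπS a ha, hπS b hb]
        refine Adj.reachable ((deleteEdges_adj (G := H.induce S) ..).mpr ⟨hab, fun he => hne ?_⟩)
        simpa using congrArg (Sym2.map Subtype.val) (Set.mem_singleton_iff.mp he)
  rw [hπS u hu, hπS v hv] at hπuv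
  exact isAcyclic_iff_forall_adj_isBridge.mp hH (show (H.induce S).Adj ⟨u, hu⟩ ⟨v, hv⟩ from huv)
    hπuv

theorem IsTree.isAcyclic_deleteEdges_sym2_sup (hG : G.IsTree) (hS : (G.induce S).Preconnected)
    (hHS : ∀ a b, H.Adj a b → a ∈ S ∧ b ∈ S) (hH : (H.induce S).IsAcyclic) :
    (G.deleteEdges S.sym2 ⊔ H).IsAcyclic := by
  refine isAcyclic_iff_forall_adj_isBridge.mpr fun u v huv => isBridge_iff.mpr ?_
  rcases huv with huv | huv
  · exact not_reachable_deleteEdges_sup_of_deleteEdges_sym2_adj hG.isAcyclic hS hHS huv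
  · exact not_reachable_deleteEdges_sup_of_adj hG hS hHS hH huv

theorem Connected.deleteEdges_sym2_sup (hG : G.Connected) (hH : (H.induce S).Preconnected) :
    (G.deleteEdges S.sym2 ⊔ H).Connected where
  preconnected x y := (hG.preconnected x y).map_of_adj id fun a b hab => by
    by_cases hab' : a ∈ S ∧ b ∈ S
    · exact hH.reachable_of_induce (fun _ _ _ _ h => Or.inr h) hab'.1 hab'.2
    · exact Adj.reachable (G := G.deleteEdges S.sym2 ⊔ H)
        (.inl (deleteEdges_sym2_adj.mpr ⟨hab, hab'⟩))
  nonempty := hG.nonempty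

end SimpleGraph

/-- If `T` is a tree, `S` is a set of vertices such that the induced subgraph `T[S]`
is a tree, and `T'` is another tree with vertex set `S`, then the graph with edge set
`(E(T) \ E(T[S])) ∪ E(T')` is again a tree. -/
theorem stmt3 {V : Type*} (T : SimpleGraph V) (hT : T.IsTree) (S : Set V)
    (hTS : (T.induce S).IsTree)
    (T' : SimpleGraph V) (hT'S : ∀ u v : V, T'.Adj u v → u ∈ S ∧ v ∈ S)
    (hT' : (T'.induce S).IsTree)
    (R : SimpleGraph V)
    (hR : ∀ u v : V, R.Adj u v ↔ ((T.Adj u v ∧ ¬(u ∈ S ∧ v ∈ S)) ∨ T'.Adj u v)) :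
    R.IsTree := by
  obtain rfl : R = T.deleteEdges S.sym2 ⊔ T' := by
    ext u v
    rw [hR, sup_adj, deleteEdges_sym2_adj]
  exact ⟨hT.connected.deleteEdges_sym2_sup hT'.connected.preconnected,
    hT.isAcyclic_deleteEdges_sym2_sup hTS.connected.preconnected hT'S hT'.isAcyclic⟩
end

section
/- Let G be a connected weighted graph with distinct edge weights and let S ⊆ V(G) be such that the induced subgraph of MST(G) on S is connected. If e is an edge of MST(G) with both endpoints in S, then e is an edge of MST(G[S]), the minimum spanning tree of the induced weighted subgraph on S. -/
open SimpleGraph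

/-- Total weight of the edges of a graph. -/
noncomputable def wsum {V : Type*} [Finite V] (w : Sym2 V → ℝ) (T : SimpleGraph V) : ℝ :=
  ∑ e ∈ T.edgeSet.toFinite.toFinset, w e

/-- `T` is a minimum spanning tree of `G` with respect to the edge weights `w`. -/
def IsMST {V : Type*} [Finite V] (G : SimpleGraph V) (w : Sym2 V → ℝ)
    (T : SimpleGraph V) : Prop :=
  T ≤ G ∧ T.IsTree ∧ ∀ T' : SimpleGraph V, T' ≤ G → T'.IsTree → wsum w T ≤ wsum w T'

/-- The weights of distinct edges of `G` are distinct. -/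
def DistinctWeights {V : Type*} (G : SimpleGraph V) (w : Sym2 V → ℝ) : Prop :=
  ∀ e ∈ G.edgeSet, ∀ f ∈ G.edgeSet, w e = w f → e = f

/-!
Let `e = uv` be an edge of `MST(G)` with `u, v ∈ S`. Deleting `e` from `MST(G)` splits the
vertices into two sides, and the path from `u` to `v` in `MST(G[S])` crosses between them along
some edge `f`. The cut property of `MST(G)` gives `w e ≤ w f`. Conversely, deleting `f` from
`MST(G[S])` separates `u` from `v`, since `f` lies on the unique path between them, so the cut
property of `MST(G[S])` gives `w f ≤ w e`. Distinct weights force `e = f`.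
-/

namespace SimpleGraph

variable {V : Type*} {G T : SimpleGraph V}

theorem Walk.reachable_deleteEdges_left_or_right {a b z : V} (p : G.Walk z a) :
    (G.deleteEdges {s(a, b)}).Reachable z a ∨ (G.deleteEdges {s(a, b)}).Reachable z b := by
  induction p with
  | nil => exact .inl .rfl
  | @cons u v c h p ih =>
    by_cases hs : s(u, v) = s(c, b)
    · rcases Sym2.eq_iff.mp hs with ⟨rfl, -⟩ | ⟨rfl, -⟩
      · exact .inl .rfl
      · exact .inr .rfl
    · have huv : (G.deleteEdges {s(c, b)}).Reachable u v :=
        (deleteEdges_adj.mpr ⟨h, by simpa using hs⟩).reachable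
      exact ih.imp huv.trans huv.trans

theorem IsAcyclic.not_reachable_deleteEdges_of_mem_edges (hG : G.IsAcyclic) {u v : V}
    {p : G.Walk u v} (hp : p.IsPath) {e : Sym2 V} (he : e ∈ p.edges) :
    ¬(G.deleteEdges {e}).Reachable u v := by
  classical
  rintro ⟨r⟩
  let r' : G.Walk u v := r.mapLe (deleteEdges_le _)
  have hpr : p = r'.bypass := congrArg Subtype.val <|
    (hG.subsingleton_path u v).elim ⟨p, hp⟩ ⟨r'.bypass, r'.bypass_isPath⟩
  have her : e ∈ r.edges := by
    rw [← Walk.edges_mapLe_eq_edges (deleteEdges_le _)]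
    exact r'.edges_bypass_subset_edges (hpr ▸ he)
  simpa using r.edges_subset_edgeSet her

theorem IsTree.deleteEdges_sup_edge (hT : T.IsTree) {a b x y : V}
    (hxy : ¬(T.deleteEdges {s(a, b)}).Reachable x y) :
    (T.deleteEdges {s(a, b)} ⊔ edge x y).IsTree := by
  set D := T.deleteEdges {s(a, b)}
  have hle : D ≤ D ⊔ edge x y := le_sup_left
  have hside (z : V) : D.Reachable z a ∨ D.Reachable z b :=
    ((hT.connected z a).some).reachable_deleteEdges_left_or_right
  have hxy_edge : (D ⊔ edge x y).Reachable x y :=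
    Adj.reachable <| by
      simp only [sup_adj, edge_adj]
      exact .inr ⟨by simp, fun h => hxy (h ▸ .rfl)⟩
  have hab : (D ⊔ edge x y).Reachable a b := by
    rcases hside x with hx | hx <;> rcases hside y with hy | hy
    · exact absurd (hx.trans hy.symm) hxy
    · exact ((hx.mono hle).symm.trans hxy_edge).trans (hy.mono hle)
    · exact ((hy.mono hle).symm.trans hxy_edge.symm).trans (hx.mono hle)
    · exact absurd (hx.trans hy.symm) hxy
  refine ⟨(connected_iff_exists_forall_reachable _).mpr ⟨a, fun z => ?_⟩,
    (hT.isAcyclic.anti (deleteEdges_le _)).sup_edge_of_not_reachable hxy⟩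
  rcases hside z with hz | hz
  · exact (hz.mono hle).symm
  · exact hab.trans (hz.mono hle).symm

end SimpleGraph

theorem wsum_deleteEdges_sup_edge {V : Type*} [Finite V] (w : Sym2 V → ℝ) {T : SimpleGraph V}
    {e : Sym2 V} {x y : V} (he : e ∈ T.edgeSet) (hxy : x ≠ y) (hf : s(x, y) ∉ T.edgeSet) :
    wsum w (T.deleteEdges {e} ⊔ edge x y) = wsum w T - w e + w s(x, y) := by
  classical
  have hedges : (T.deleteEdges {e} ⊔ edge x y).edgeSet.toFinite.toFinset
      = insert s(x, y) (T.edgeSet.toFinite.toFinset.erase e) := by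
    ext f
    simp only [Set.Finite.mem_toFinset, Finset.mem_insert, Finset.mem_erase, edgeSet_sup,
      edgeSet_deleteEdges, edgeSet_edge_of_ne hxy, Set.mem_union, Set.mem_sdiff,
      Set.mem_singleton_iff]
    tauto
  rw [wsum, wsum, hedges, Finset.sum_insert (by simp [hf]),
    Finset.sum_erase_eq_sub (by simpa using he)]
  ring

theorem IsMST.weight_le_of_not_reachable {V : Type*} [Finite V] {G T : SimpleGraph V}
    {w : Sym2 V → ℝ} (hT : IsMST G w T) {a b x y : V} (hab : T.Adj a b) (hxy : G.Adj x y)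
    (hcut : ¬(T.deleteEdges {s(a, b)}).Reachable x y) : w s(a, b) ≤ w s(x, y) := by
  by_cases hfe : s(x, y) = s(a, b)
  · rw [hfe]
  have hf : s(x, y) ∉ T.edgeSet := fun hf =>
    hcut (deleteEdges_adj.mpr ⟨hf, by simpa using hfe⟩).reachable
  have hle : T.deleteEdges {s(a, b)} ⊔ edge x y ≤ G :=
    sup_le ((deleteEdges_le _).trans hT.1) ((edge_le_iff _).mpr (.inr hxy))
  have hmin := hT.2.2 _ hle (hT.2.1.deleteEdges_sup_edge hcut)
  rw [wsum_deleteEdges_sup_edge w hab hxy.ne hf] at hmin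
  linarith

theorem stmt4_general {V : Type*} [Finite V] (G : SimpleGraph V) (w : Sym2 V → ℝ)
    (hd : DistinctWeights G w)
    (M : SimpleGraph V) (hM : IsMST G w M)
    (S : Set V)
    (M' : SimpleGraph S)
    (hM' : IsMST (G.induce S) (fun e => w (e.map Subtype.val)) M') :
    ∀ u v : S, M.Adj u v → M'.Adj u v := by
  intro u v huv
  obtain ⟨q, hq, -⟩ := hM'.2.1.existsUnique_path u v
  have hbridge : ¬(M.deleteEdges {s((u : V), v)}).Reachable u v :=
    isAcyclic_iff_forall_adj_isBridge.mp hM.2.1.isAcyclic huv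
  obtain ⟨d, hdq, hx, hy⟩ := q.exists_boundary_dart
    (Subtype.val ⁻¹' {z | (M.deleteEdges {s((u : V), v)}).Reachable u z}) .rfl hbridge
  have hxy : M'.Adj d.fst d.snd := d.adj
  have hle : w s(u, v) ≤ w s(d.fst, d.snd) :=
    hM.weight_le_of_not_reachable huv (hM'.1 hxy) fun h => hy (hx.trans h)
  have hge : w s(d.fst.val, d.snd) ≤ w s(u.val, v) := by
    simpa using hM'.weight_le_of_not_reachable hxy (hM.1 huv)
      (hM'.2.1.isAcyclic.not_reachable_deleteEdges_of_mem_edges hq (List.mem_map_of_mem hdq))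
  have heq : s(d.fst.val, d.snd.val) = s(u.val, v.val) :=
    hd _ (hM'.1 hxy) _ (hM.1 huv) (le_antisymm hge hle)
  have hdart : s(d.fst, d.snd) = s(u, v) :=
    Sym2.map.injective Subtype.val_injective (by simpa using heq)
  exact (hdart ▸ hxy : s(u, v) ∈ M'.edgeSet)

/-- If `S ⊆ V(G)` is such that the induced subgraph of `MST(G)` on `S` is connected,
then every edge of `MST(G)` with both endpoints in `S` is an edge of `MST(G[S])`. -/
theorem stmt4 {V : Type*} [Finite V] (G : SimpleGraph V) (w : Sym2 V → ℝ)
    (hG : G.Connected) (hd : DistinctWeights G w)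
    (M : SimpleGraph V) (hM : IsMST G w M)
    (S : Set V) (hMS : (M.induce S).Connected) (hGS : (G.induce S).Connected)
    (M' : SimpleGraph S)
    (hM' : IsMST (G.induce S) (fun e => w (e.map Subtype.val)) M') :
    ∀ u v : S, M.Adj u v → M'.Adj u v :=
  stmt4_general G w hd M hM S M' hM'
end

section
/- Let G be a connected weighted graph on n vertices with distinct edge weights all at most 1, and let H be a spanning subgraph of G that contains MST(G) as a subgraph. Then there is a sequence of at most |E(H)| − (n−1) local replacement steps, each replacing a connected induced subgraph of total weight at most 1 + wdiam(MST(G)) by its minimum spanning tree, that transforms H into MST(G). -/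
open SimpleGraph

/-- Weighted diameter of a graph: supremum of the weights of its paths. -/
noncomputable def wdiam {V : Type*} (w : Sym2 V → ℝ) (T : SimpleGraph V) : ℝ :=
  sSup {x : ℝ | ∃ (u v : V) (p : T.Walk u v), p.IsPath ∧ x = (p.edges.map w).sum}

/-- The graph `H[S]` consisting of the edges of `H` with both endpoints in `S`. -/
def restrictSet {V : Type*} (H : SimpleGraph V) (S : Set V) : SimpleGraph V where
  Adj u v := H.Adj u v ∧ u ∈ S ∧ v ∈ S
  symm := by constructor; intro u v h; exact ⟨h.1.symm, h.2.2, h.2.1⟩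
  loopless := by constructor; intro u h; exact H.loopless.irrefl u h.1

/-- One local replacement step: `H[S]` is connected, and `H'` is obtained from `H` by
replacing the edges of `H[S]` by the edges of a minimum spanning tree of `G[S]`. -/
def ReplStep {V : Type*} [Finite V] (G : SimpleGraph V) (w : Sym2 V → ℝ)
    (H H' : SimpleGraph V) (S : Set V) : Prop :=
  (H.induce S).Connected ∧
  ∃ T : SimpleGraph S, IsMST (G.induce S) (fun e => w (e.map Subtype.val)) T ∧
    ∀ a b : V, H'.Adj a b ↔
      ((H.Adj a b ∧ ¬(a ∈ S ∧ b ∈ S)) ∨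
        ∃ (ha : a ∈ S) (hb : b ∈ S), T.Adj ⟨a, ha⟩ ⟨b, hb⟩)

/-!
Choose an edge `uv` of `H` outside `M` whose path `q` in the tree `M` is as short as possible,
and let `S` be the vertex set of `q`. Every other edge `ab` of `H` inside `S` lies on `q`: a tree
edge lies on every walk from `a` to `b` in `M`, in particular on the subwalk of `q`, and for a
non-tree edge that subwalk would be shorter than `q`. So `H[S]` is the cycle `q + uv`, of weight
at most `1 + wdiam M`, and by the exchange argument `M[S] = q` is a minimum spanning tree of
`G[S]`. Replacing `H[S]` by `M[S]` deletes `uv`, so each step removes an edge, while `M` itself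
has `n - 1` edges.
-/

theorem exists_chain_of_decreasing {α β : Type*} [Nonempty β] {R : α → α → β → Prop}
    {P : α → Prop} (μ : α → ℕ) (t : α)
    (hstep : ∀ a, P a → a ≠ t → ∃ b s, R a b s ∧ P b ∧ μ b < μ a) (a : α) (ha : P a) :
    ∃ m, μ t + m ≤ μ a ∧ ∃ (as : ℕ → α) (ss : ℕ → β),
      as 0 = a ∧ as m = t ∧ ∀ i < m, R (as i) (as (i + 1)) (ss i) := by
  by_cases hat : a = t
  · subst hat
    exact ⟨0, le_rfl, fun _ => a, fun _ => Classical.arbitrary β, rfl, rfl, by simp⟩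
  obtain ⟨b, s, hR, hb, hlt⟩ := hstep a ha hat
  obtain ⟨m, hm, as, ss, h0, hmt, hchain⟩ := exists_chain_of_decreasing μ t hstep b hb
  refine ⟨m + 1, by omega, fun | 0 => a | i + 1 => as i, fun | 0 => s | i + 1 => ss i,
    rfl, hmt, ?_⟩
  rintro (_ | i) hi
  · simpa [h0] using hR
  · exact hchain i (by omega)
termination_by μ a

namespace SimpleGraph

variable {V : Type*}

namespace Walk

variable {G : SimpleGraph V} {u v x y : V}

theorem exists_eq_append_append_of_mem_support (p : G.Walk u v) (hx : x ∈ p.support)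
    (hy : y ∈ p.support) :
    (∃ (p₁ : G.Walk u x) (r : G.Walk x y) (p₂ : G.Walk y v), p = p₁.append (r.append p₂)) ∨
      ∃ (p₁ : G.Walk u y) (r : G.Walk y x) (p₂ : G.Walk x v), p = p₁.append (r.append p₂) := by
  classical
  by_cases hy' : y ∈ (p.dropUntil x hx).support
  · exact .inl ⟨p.takeUntil x hx, (p.dropUntil x hx).takeUntil y hy',
      (p.dropUntil x hx).dropUntil y hy', by rw [take_spec, take_spec]⟩
  · have hy'' : y ∈ (p.takeUntil x hx).support := by
      rw [← p.take_spec hx, mem_support_append_iff] at hy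
      exact hy.resolve_right hy'
    exact .inr ⟨(p.takeUntil x hx).takeUntil y hy'', (p.takeUntil x hx).dropUntil y hy'',
      p.dropUntil x hx, by rw [append_assoc, take_spec, take_spec]⟩

theorem exists_subwalk_of_mem_support (p : G.Walk u v) (hx : x ∈ p.support)
    (hy : y ∈ p.support) :
    ∃ r : G.Walk x y, r.edges ⊆ p.edges ∧ (r.length < p.length ∨ s(x, y) = s(u, v)) := by
  have middle : ∀ {a b} (p₁ : G.Walk u a) (r : G.Walk a b) (p₂ : G.Walk b v),
      p = p₁.append (r.append p₂) →
        r.edges ⊆ p.edges ∧ (r.length < p.length ∨ s(a, b) = s(u, v)) := by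
    rintro a b p₁ r p₂ rfl
    refine ⟨by simp [edges_append], ?_⟩
    by_cases h : p₁.length = 0 ∧ p₂.length = 0
    · obtain ⟨rfl⟩ := eq_of_length_eq_zero h.1
      obtain ⟨rfl⟩ := eq_of_length_eq_zero h.2
      exact .inr rfl
    · left
      simp only [length_append]
      omega
  rcases p.exists_eq_append_append_of_mem_support hx hy with
    ⟨p₁, r, p₂, hp⟩ | ⟨p₁, r, p₂, hp⟩
  · exact ⟨r, middle p₁ r p₂ hp⟩
  · obtain ⟨hsub, hlen⟩ := middle p₁ r p₂ hp
    exact ⟨r.reverse, by simpa using hsub, by simpa [Sym2.eq_swap] using hlen⟩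

end Walk

theorem IsTree.exists_chordless_fundamentalCycle [Finite V] {M H : SimpleGraph V}
    (hM : M.IsTree) (hMH : M < H) :
    ∃ (u v : V) (q : M.Walk u v), q.IsPath ∧ H.Adj u v ∧ ¬M.Adj u v ∧
      ∀ a ∈ q.support, ∀ b ∈ q.support, H.Adj a b → s(a, b) ∈ q.edges ∨ s(a, b) = s(u, v) := by
  obtain ⟨a, b, hab, hMab⟩ : ∃ a b, H.Adj a b ∧ ¬M.Adj a b := by
    by_contra! h
    exact hMH.not_ge fun a b => h a b
  obtain ⟨⟨u, v⟩, ⟨huv, hMuv⟩, hmin⟩ :=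
    Set.exists_min_image {p : V × V | H.Adj p.1 p.2 ∧ ¬M.Adj p.1 p.2} (fun p => M.dist p.1 p.2)
      (Set.toFinite _) ⟨(a, b), hab, hMab⟩
  obtain ⟨q, hq, hqlen⟩ := hM.connected.exists_path_of_dist u v
  refine ⟨u, v, q, hq, huv, hMuv, fun a ha b hb hab => ?_⟩
  obtain ⟨r, hrq, hlen⟩ := q.exists_subwalk_of_mem_support ha hb
  by_cases hMab : M.Adj a b
  · have hbridge := isAcyclic_iff_forall_adj_isBridge.1 hM.isAcyclic hMab
    exact .inl (hrq (isBridge_iff_forall_walk_mem_edges.1 hbridge r))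
  · refine .inr (hlen.resolve_left (not_lt.2 ?_))
    calc q.length = M.dist u v := hqlen
      _ ≤ M.dist a b := hmin (a, b) ⟨hab, hMab⟩
      _ ≤ r.length := dist_le r

def replaceInduce (K : SimpleGraph V) (S : Set V) (T : SimpleGraph S) : SimpleGraph V :=
  K.deleteEdges S.sym2 ⊔ T.spanningCoe

section replaceInduce

variable {K G : SimpleGraph V} {S : Set V} {T : SimpleGraph S}

theorem replaceInduce_adj {a b : V} :
    (K.replaceInduce S T).Adj a b ↔
      (K.Adj a b ∧ ¬(a ∈ S ∧ b ∈ S)) ∨ ∃ (ha : a ∈ S) (hb : b ∈ S), T.Adj ⟨a, ha⟩ ⟨b, hb⟩ := by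
  simp only [replaceInduce, sup_adj, deleteEdges_adj, Set.mk_mem_sym2_iff, map_adj,
    Function.Embedding.subtype_apply]
  refine or_congr_right ⟨?_, ?_⟩
  · rintro ⟨a', b', h, rfl, rfl⟩
    exact ⟨a'.2, b'.2, h⟩
  · rintro ⟨ha, hb, h⟩
    exact ⟨_, _, h, rfl, rfl⟩

theorem replaceInduce_induce_self (K : SimpleGraph V) (S : Set V) :
    K.replaceInduce S (K.induce S) = K := by
  ext a b
  rw [replaceInduce_adj]
  by_cases h : a ∈ S ∧ b ∈ S <;> simp [h]

theorem replaceInduce_le (hK : K ≤ G) (hT : T ≤ G.induce S) : K.replaceInduce S T ≤ G :=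
  sup_le ((deleteEdges_le _).trans hK) ((map_le_iff_le_comap _ _ _).2 hT)

theorem le_replaceInduce {M : SimpleGraph V} (hK : M ≤ K) : M ≤ K.replaceInduce S (M.induce S) :=
  fun a b h => replaceInduce_adj.2 <| by
    by_cases hab : a ∈ S ∧ b ∈ S
    · exact .inr ⟨hab.1, hab.2, h⟩
    · exact .inl ⟨hK h, hab⟩

theorem Connected.replaceInduce (hK : K.Connected) (hT : T.Connected) :
    (K.replaceInduce S T).Connected := by
  have : Nonempty V := hK.nonempty
  have hadj : ∀ x y, K.Adj x y → (K.replaceInduce S T).Reachable x y := fun x y hxy => by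
    by_cases h : x ∈ S ∧ y ∈ S
    · exact (hT.preconnected ⟨x, h.1⟩ ⟨y, h.2⟩).map
        (Hom.ofLE le_sup_right |>.comp (Embedding.spanningCoe T).toHom)
    · exact Adj.reachable (replaceInduce_adj.2 (.inl ⟨hxy, h⟩))
  refine ⟨fun a b => ?_⟩
  have := hK.preconnected a b
  rw [reachable_iff_reflTransGen] at this ⊢
  exact this.lift' id fun x y h => (reachable_iff_reflTransGen x y).1 (hadj x y h)

theorem edgeSet_replaceInduce :
    (K.replaceInduce S T).edgeSet = K.edgeSet \ S.sym2 ∪ Sym2.map (↑) '' T.edgeSet := by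
  rw [replaceInduce, edgeSet_sup, edgeSet_deleteEdges, edgeSet_map]
  rfl

theorem disjoint_edgeSet_replaceInduce :
    Disjoint (K.edgeSet \ S.sym2) (Sym2.map ((↑) : S → V) '' T.edgeSet) := by
  rw [Set.disjoint_right]
  rintro _ ⟨e, -, rfl⟩ ⟨-, he⟩
  induction e using Sym2.ind with
  | h a b => exact he ⟨a.2, b.2⟩

theorem ncard_edgeSet_replaceInduce [Finite V] :
    (K.replaceInduce S T).edgeSet.ncard = (K.edgeSet \ S.sym2).ncard + T.edgeSet.ncard := by
  rw [edgeSet_replaceInduce, Set.ncard_union_eq disjoint_edgeSet_replaceInduce,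
    Set.ncard_image_of_injective _ (Sym2.map.injective Subtype.val_injective)]

theorem finsum_edgeSet_replaceInduce [Finite V] {β : Type*} [AddCommMonoid β]
    (f : Sym2 V → β) :
    ∑ᶠ e ∈ (K.replaceInduce S T).edgeSet, f e =
      ∑ᶠ e ∈ K.edgeSet \ S.sym2, f e + ∑ᶠ e ∈ T.edgeSet, f (e.map (↑)) := by
  rw [edgeSet_replaceInduce, finsum_mem_union disjoint_edgeSet_replaceInduce (Set.toFinite _)
    (Set.toFinite _), finsum_mem_image (Sym2.map.injective Subtype.val_injective).injOn]

end replaceInduce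

end SimpleGraph

section

variable {V : Type*}

theorem wsum_eq_finsum [Finite V] (w : Sym2 V → ℝ) (T : SimpleGraph V) :
    wsum w T = ∑ᶠ e ∈ T.edgeSet, w e :=
  (finsum_mem_eq_finite_toFinset_sum w _).symm

theorem sum_edges_le_wdiam [Finite V] (w : Sym2 V → ℝ) {T : SimpleGraph V} {u v : V}
    {p : T.Walk u v} (hp : p.IsPath) : (p.edges.map w).sum ≤ wdiam w T := by
  classical
  have : Fintype V := Fintype.ofFinite V
  refine le_csSup ?_ ⟨u, v, p, hp, rfl⟩
  refine (Set.finite_range fun x : Σ a b, T.Path a b => (x.2.2.1.edges.map w).sum).bddAbove.mono ?_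
  rintro _ ⟨a, b, p, hp, rfl⟩
  exact ⟨⟨a, b, p, hp⟩, rfl⟩

/-- The exchange argument: a spanning tree `T` of `G[S]` lighter than `M[S]` would make
`M` with `M[S]` replaced by `T` a spanning tree of `G` lighter than `M`. -/
theorem IsMST.induce [Finite V] {G M : SimpleGraph V} {w : Sym2 V → ℝ} (hM : IsMST G w M)
    {S : Set V} (hS : (M.induce S).Connected) :
    IsMST (G.induce S) (fun e => w (e.map Subtype.val)) (M.induce S) := by
  obtain ⟨hMG, hMtree, hmin⟩ := hM
  have hMS : (M.induce S).IsTree := ⟨hS, hMtree.isAcyclic.induce S⟩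
  refine ⟨fun a b h => hMG h, hMS, fun T hTG hT => ?_⟩
  have hcardN := ncard_edgeSet_replaceInduce (K := M) (S := S) (T := T)
  have hcardM := ncard_edgeSet_replaceInduce (K := M) (S := S) (T := M.induce S)
  rw [replaceInduce_induce_self] at hcardM
  have hN : (M.replaceInduce S T).IsTree := by
    rw [isTree_iff_connected_and_card] at hMtree hMS hT ⊢
    refine ⟨hMtree.1.replaceInduce hT.1, ?_⟩
    simp only [Nat.card_coe_set_eq] at hMtree hMS hT ⊢
    omega
  have hle := hmin _ (replaceInduce_le hMG hTG) hN
  have hwM := finsum_edgeSet_replaceInduce (K := M) (S := S) (T := M.induce S) w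
  rw [replaceInduce_induce_self] at hwM
  simp only [wsum_eq_finsum, finsum_edgeSet_replaceInduce, hwM] at hle ⊢
  linarith

theorem wsum_restrictSet_support_of_chordless [Finite V] (w : Sym2 V → ℝ) {M H : SimpleGraph V}
    (hMH : M ≤ H) {u v : V} {q : M.Walk u v} (hq : q.IsPath) (huv : H.Adj u v)
    (hMuv : ¬M.Adj u v)
    (hchord : ∀ a ∈ q.support, ∀ b ∈ q.support, H.Adj a b → s(a, b) ∈ q.edges ∨ s(a, b) = s(u, v)) :
    wsum w (restrictSet H {x | x ∈ q.support}) = w s(u, v) + (q.edges.map w).sum := by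
  classical
  have hedges : (restrictSet H {x | x ∈ q.support}).edgeSet = insert s(u, v) {e | e ∈ q.edges} := by
    ext e
    induction e using Sym2.ind with
    | h a b =>
      simp only [mem_edgeSet, Set.mem_insert_iff, Set.mem_ofPred_eq]
      constructor
      · rintro ⟨hab, ha, hb⟩
        exact (hchord a ha b hb hab).symm
      · rintro (he | he)
        · rcases Sym2.eq_iff.1 he with ⟨rfl, rfl⟩ | ⟨rfl, rfl⟩
          exacts [⟨huv, q.start_mem_support, q.end_mem_support⟩,
            ⟨huv.symm, q.end_mem_support, q.start_mem_support⟩]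
        · exact ⟨hMH (q.adj_of_mem_edges he), q.fst_mem_support_of_mem_edges he,
            q.snd_mem_support_of_mem_edges he⟩
  have hnot : s(u, v) ∉ {e | e ∈ q.edges} := fun h => hMuv (q.adj_of_mem_edges h)
  rw [wsum_eq_finsum, hedges, finsum_mem_insert _ hnot (Set.toFinite _), ← List.coe_toFinset,
    finsum_mem_coe_finset, List.sum_toFinset _ hq.edges_nodup]

theorem exists_replStep [Finite V] {G H M : SimpleGraph V} {w : Sym2 V → ℝ}
    (hw : ∀ e ∈ G.edgeSet, w e ≤ 1) (hHG : H ≤ G) (hM : IsMST G w M) (hMH : M < H) :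
    ∃ (S : Set V) (H' : SimpleGraph V), ReplStep G w H H' S ∧
      wsum w (restrictSet H S) ≤ 1 + wdiam w M ∧ M ≤ H' ∧ H' < H := by
  obtain ⟨u, v, q, hq, huv, hMuv, hchord⟩ := hM.2.1.exists_chordless_fundamentalCycle hMH
  have hMS : (M.induce {x | x ∈ q.support}).Connected := q.connected_induce_support
  refine ⟨_, H.replaceInduce _ (M.induce _), ⟨hMS.mono fun a b h => hMH.le h, _,
    hM.induce hMS, fun a b => replaceInduce_adj⟩, ?_, le_replaceInduce hMH.le, ?_⟩
  · rw [wsum_restrictSet_support_of_chordless w hMH.le hq huv hMuv hchord]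
    linarith [hw s(u, v) (hHG huv), sum_edges_le_wdiam w hq]
  · refine lt_of_le_of_ne (replaceInduce_le le_rfl fun a b h => hMH.le h) fun h => ?_
    rcases replaceInduce_adj.1 (h ▸ huv) with ⟨_, hout⟩ | ⟨_, _, hMuv'⟩
    · exact hout ⟨q.start_mem_support, q.end_mem_support⟩
    · exact hMuv hMuv'

end

theorem stmt6_general {V : Type*} [Fintype V] (G : SimpleGraph V) (w : Sym2 V → ℝ)
    (hw : ∀ e ∈ G.edgeSet, 0 < w e ∧ w e ≤ 1)
    (H M : SimpleGraph V) (hHG : H ≤ G) (hM : IsMST G w M) (hMH : M ≤ H) :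
    ∃ m : ℕ, m ≤ H.edgeSet.toFinite.toFinset.card - (Fintype.card V - 1) ∧
      ∃ (Hs : ℕ → SimpleGraph V) (Ss : ℕ → Set V),
        Hs 0 = H ∧ Hs m = M ∧
        ∀ i < m, ReplStep G w (Hs i) (Hs (i + 1)) (Ss i) ∧
          wsum w (restrictSet (Hs i) (Ss i)) ≤ 1 + wdiam w M := by
  have hcardM := (isTree_iff_connected_and_card.1 hM.2.1).2
  rw [Nat.card_coe_set_eq, Nat.card_eq_fintype_card] at hcardM
  obtain ⟨m, hm, Hs, Ss, h0, hmM, hsteps⟩ := exists_chain_of_decreasing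
    (R := fun H H' S => ReplStep G w H H' S ∧ wsum w (restrictSet H S) ≤ 1 + wdiam w M)
    (P := fun H => M ≤ H ∧ H ≤ G) (fun H => H.edgeSet.ncard) M
    (fun H ⟨hMH, hHG⟩ hne => by
      obtain ⟨S, H', hstep, hwt, hMH', hH'H⟩ :=
        exists_replStep (fun e he => (hw e he).2) hHG hM (lt_of_le_of_ne hMH (Ne.symm hne))
      exact ⟨H', S, ⟨hstep, hwt⟩, ⟨hMH', hH'H.le.trans hHG⟩,
        Set.ncard_lt_ncard (edgeSet_ssubset_edgeSet.2 hH'H)⟩)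
    H ⟨hMH, hHG⟩
  refine ⟨m, ?_, Hs, Ss, h0, hmM, hsteps⟩
  rw [← Set.ncard_eq_toFinset_card]
  omega

/-- If `H` is a spanning subgraph of `G` containing `MST(G)`, then at most
`|E(H)| − (n−1)` local replacement steps, each of weight at most `1 + wdiam(MST(G))`,
transform `H` into `MST(G)`. -/
theorem stmt6 {V : Type*} [Fintype V] (G : SimpleGraph V) (w : Sym2 V → ℝ)
    (hG : G.Connected) (hd : DistinctWeights G w)
    (hw : ∀ e ∈ G.edgeSet, 0 < w e ∧ w e ≤ 1)
    (H M : SimpleGraph V) (hHG : H ≤ G) (hM : IsMST G w M) (hMH : M ≤ H) :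
    ∃ m : ℕ, m ≤ H.edgeSet.toFinite.toFinset.card - (Fintype.card V - 1) ∧
      ∃ (Hs : ℕ → SimpleGraph V) (Ss : ℕ → Set V),
        Hs 0 = H ∧ Hs m = M ∧
        ∀ i < m, ReplStep G w (Hs i) (Hs (i + 1)) (Ss i) ∧
          wsum w (restrictSet (Hs i) (Ss i)) ≤ 1 + wdiam w M :=
  stmt6_general G w hw H M hHG hM hMH
end

section
/- If P is a path contained in a tree T₂, and the edge set of T₂ is contained in E(T₁) ∪ E(T₀) for trees T₁ and T₀ (where T₀ is a tree on a subset of the vertices), then P decomposes uniquely into edge-disjoint consecutive subpaths P₀, P₁, ..., P_{2k}, alternating so that P_i ⊆ T₀ for odd i and P_i ⊆ T₁ for even i; moreover the odd-indexed subpaths are pairwise vertex-disjoint subpaths of T₀, so k ≤ |E(T₀)| and the total weight of the odd-indexed subpaths is at most the weight of T₀. -/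
open SimpleGraph

/-- `IsAltDecomp T0 T1 p L` says that the list of lists `L` is the decomposition of the
edge list of the path `p` into `2k+1` consecutive (edge-)blocks, alternating so that
odd-indexed blocks are nonempty and consist of edges of `T0`, while even-indexed blocks
consist of edges of `T1` which are not edges of `T0`; all blocks except possibly the
first and last are nonempty. (Blocks correspond to the subpaths `P₀,…,P_{2k}`; a single
vertex subpath corresponds to an empty block.) -/
def IsAltDecomp {V : Type*} (T0 T1 : SimpleGraph V) {T2 : SimpleGraph V} {u v : V}
    (p : T2.Walk u v) (L : List (List (Sym2 V))) : Prop :=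
  L.length % 2 = 1 ∧ p.edges = L.flatten ∧
  (∀ i < L.length,
    (i % 2 = 1 → L.getD i [] ≠ [] ∧ ∀ e ∈ L.getD i [], e ∈ T0.edgeSet) ∧
    (i % 2 = 0 → ∀ e ∈ L.getD i [], e ∈ T1.edgeSet ∧ e ∉ T0.edgeSet)) ∧
  (∀ i, i % 2 = 0 → 0 < i → i + 1 < L.length → L.getD i [] ≠ [])

/-!
Colour each edge of `P` by whether it lies in `T₀`. The decomposition is forced: its blocks are
the maximal monochromatic runs of the edge list, padded by an empty first or last block when
the path starts or ends in `T₀`. Two distinct odd blocks are separated along `P` by a nonempty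
even block, so, `P` being a path, they share no vertex. Hence the odd blocks are pairwise
disjoint nonempty sets of edges of `T₀`, which bounds both their number and their total weight.
-/

namespace List

variable {α : Type*}

theorem takeWhile_append_of_head?_eq_false {p : α → Bool} {xs ys : List α}
    (hxs : ∀ x ∈ xs, p x = true) (hys : ∀ y ∈ ys.head?, p y = false) :
    (xs ++ ys).takeWhile p = xs := by
  rw [takeWhile_append_of_pos hxs]
  cases ys with
  | nil => simp
  | cons y ys => simp_all

theorem dropWhile_append_of_head?_eq_false {p : α → Bool} {xs ys : List α}
    (hxs : ∀ x ∈ xs, p x = true) (hys : ∀ y ∈ ys.head?, p y = false) :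
    (xs ++ ys).dropWhile p = ys := by
  rw [dropWhile_append_of_pos hxs]
  cases ys with
  | nil => simp
  | cons y ys => simp_all

theorem getD_nil_sublist_flatten (L : List (List α)) (i : ℕ) : L.getD i [] <+ L.flatten := by
  rcases lt_or_ge i L.length with hi | hi
  · rw [getD_eq_getElem _ _ hi]
    exact sublist_flatten_of_mem (getElem_mem hi)
  · simp [getElem?_eq_none hi]

theorem exists_flatten_eq_append_getD_append {L : List (List α)} {i j : ℕ} (hij : i + 1 < j)
    (hj : j < L.length) : ∃ l₁ l₃, L.flatten = l₁ ++ L.getD (i + 1) [] ++ l₃ ∧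
      L.getD i [] ⊆ l₁ ∧ L.getD j [] ⊆ l₃ := by
  refine ⟨(L.take (i + 1)).flatten, (L.drop (i + 2)).flatten, ?_, ?_, ?_⟩
  · rw [getD_eq_getElem _ _ (by omega)]
    conv_lhs => rw [← take_append_drop (i + 1) L, drop_eq_getElem_cons (by omega)]
    simp only [flatten_append, flatten_cons, append_assoc]
  · have := (getD_nil_sublist_flatten (L.take (i + 1)) i).subset
    rwa [getD_eq_getElem?_getD, getElem?_take_of_lt (by omega), ← getD_eq_getElem?_getD] at this
  · have := (getD_nil_sublist_flatten (L.drop (i + 2)) (j - (i + 2))).subset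
    rwa [getD_eq_getElem?_getD, getElem?_drop, Nat.add_sub_cancel' (by omega),
      ← getD_eq_getElem?_getD] at this

end List

open List

section AltSplit

variable {α : Type*} {b : α → Bool}

def IsAltSplit (b : α → Bool) (l : List α) (L : List (List α)) : Prop :=
  L.length % 2 = 1 ∧ l = L.flatten ∧
  (∀ i < L.length,
    (i % 2 = 1 → L.getD i [] ≠ [] ∧ ∀ x ∈ L.getD i [], b x = true) ∧
    (i % 2 = 0 → ∀ x ∈ L.getD i [], b x = false)) ∧
  (∀ i, i % 2 = 0 → 0 < i → i + 1 < L.length → L.getD i [] ≠ [])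

theorem isAltSplit_singleton_iff {l A : List α} :
    IsAltSplit b l [A] ↔ l = A ∧ ∀ x ∈ A, b x = false := by
  constructor
  · rintro ⟨-, hl, hblocks, -⟩
    exact ⟨by simpa using hl, (hblocks 0 (by simp)).2 rfl⟩
  · rintro ⟨rfl, hA⟩
    refine ⟨rfl, by simp, fun i hi => ?_, fun i _ _ hi => by simp at hi⟩
    obtain rfl : i = 0 := by simpa using hi
    exact ⟨by omega, fun _ => hA⟩

-- The condition on `rest.flatten.head?` is what remains of the nonemptiness of the block after `C`.
theorem isAltSplit_cons_cons_iff {l A C : List α} {rest : List (List α)} :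
    IsAltSplit b l (A :: C :: rest) ↔
      l = A ++ C ++ rest.flatten ∧ (∀ x ∈ A, b x = false) ∧ C ≠ [] ∧ (∀ x ∈ C, b x = true) ∧
        (∀ x ∈ rest.flatten.head?, b x = false) ∧ IsAltSplit b rest.flatten rest := by
  constructor
  · rintro ⟨hlen, hl, hblocks, hne⟩
    have hrest : IsAltSplit b rest.flatten rest := by
      refine ⟨by simp at hlen; omega, rfl, fun i hi => ?_, fun i he hpos hi => ?_⟩
      · simpa using hblocks (i + 2) (by simp; omega)
      · simpa using hne (i + 2) (by omega) (by omega) (by simp; omega)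
    obtain ⟨hC, hCb⟩ := (hblocks 1 (by simp)).1 rfl
    refine ⟨by simpa using hl, (hblocks 0 (by simp)).2 rfl, hC, hCb, ?_, hrest⟩
    match rest, hblocks, hne with
    | [], _, _ => simp
    | [B], hblocks, _ =>
      simpa using fun x hx => (hblocks 2 (by simp)).2 rfl x (mem_of_mem_head? hx)
    | B :: B' :: rest', hblocks, hne =>
      obtain ⟨y, ys, rfl⟩ := exists_cons_of_ne_nil (by simpa using hne 2 rfl (by omega) (by simp))
      simpa using (hblocks 2 (by simp)).2 rfl y
  · rintro ⟨rfl, hA, hC, hCb, hhead, hlen, -, hblocks, hne⟩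
    refine ⟨by simp; omega, by simp, fun i hi => ?_, fun i he hpos hi => ?_⟩
    · match i with
      | 0 => exact ⟨by simp, fun _ => by simpa using hA⟩
      | 1 => exact ⟨fun _ => by simpa using ⟨hC, hCb⟩, by simp⟩
      | i + 2 => simpa using hblocks i (by simp at hi; omega)
    · match i with
      | 2 =>
        obtain ⟨B, B', rest', rfl⟩ : ∃ B B' rest', rest = B :: B' :: rest' := by
          match rest with
          | B :: B' :: rest' => exact ⟨B, B', rest', rfl⟩
          | [] | [_] => simp at hi
        rintro (rfl : B = [])
        obtain ⟨hB', hB'b⟩ := (hblocks 1 (by simp)).1 rfl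
        obtain ⟨y, ys, rfl⟩ := exists_cons_of_ne_nil (by simpa using hB')
        simpa [hB'b] using hhead y
      | i + 3 => simpa using hne (i + 1) (by omega) (by omega) (by simp at hi; omega)

theorem length_dropWhile_dropWhile_not_lt {l : List α} (h : l.dropWhile (!b ·) ≠ []) :
    ((l.dropWhile (!b ·)).dropWhile b).length < l.length := by
  obtain ⟨x, r, hr⟩ := exists_cons_of_ne_nil h
  have hx : b x = true := by simpa [hr] using head?_dropWhile_not (!b ·) l
  calc _ = (r.dropWhile b).length := by rw [hr, dropWhile_cons_of_pos hx]
    _ < (x :: r).length := Nat.lt_succ_of_le (length_dropWhile_le b r)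
    _ ≤ l.length := hr ▸ length_dropWhile_le _ l

def altSplit (b : α → Bool) (l : List α) : List (List α) :=
  if h : l.dropWhile (!b ·) = [] then [l] else
    have := length_dropWhile_dropWhile_not_lt h
    l.takeWhile (!b ·) :: (l.dropWhile (!b ·)).takeWhile b ::
      altSplit b ((l.dropWhile (!b ·)).dropWhile b)
termination_by l.length

theorem isAltSplit_iff_eq_altSplit {l : List α} {L : List (List α)} :
    IsAltSplit b l L ↔ L = altSplit b l := by
  fun_induction altSplit b l generalizing L with
  | case1 l h =>
    constructor
    · intro hL
      match L, hL with
      | [], hL => simp [IsAltSplit] at hL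
      | [A], hL => rw [(isAltSplit_singleton_iff.1 hL).1]
      | A :: C :: rest, hL =>
        obtain ⟨rfl, -, hC, hCb, -⟩ := isAltSplit_cons_cons_iff.1 hL
        obtain ⟨c, hc⟩ := exists_mem_of_ne_nil C hC
        simpa [hCb c hc] using dropWhile_eq_nil_iff.1 h c (by simp [hc])
    · rintro rfl
      exact isAltSplit_singleton_iff.2
        ⟨rfl, fun x hx => by simpa using dropWhile_eq_nil_iff.1 h x hx⟩
  | case2 l h _ ih =>
    set r := l.dropWhile (!b ·) with hr
    constructor
    · intro hL
      match L, hL with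
      | [], hL => simp [IsAltSplit] at hL
      | [A], hL =>
        obtain ⟨rfl, hA⟩ := isAltSplit_singleton_iff.1 hL
        exact absurd (dropWhile_eq_nil_iff.2 fun x hx => by simpa using hA x hx) h
      | A :: C :: rest, hL =>
        obtain ⟨rfl, hA, hC, hCb, hhead, hrest⟩ := isAltSplit_cons_cons_iff.1 hL
        obtain ⟨c, cs, rfl⟩ := exists_cons_of_ne_nil hC
        have hA' : ∀ x ∈ A, (!b x) = true := by simpa using hA
        have hCrest : ∀ x ∈ (c :: cs ++ rest.flatten).head?, (!b x) = false := by
          simp [hCb c (by simp)]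
        have hr' : r = c :: cs ++ rest.flatten := by
          rw [hr, append_assoc, dropWhile_append_of_head?_eq_false hA' hCrest]
        rw [hr', dropWhile_append_of_head?_eq_false hCb hhead] at ih
        rw [append_assoc, takeWhile_append_of_head?_eq_false hA' hCrest, hr',
          takeWhile_append_of_head?_eq_false hCb hhead,
          dropWhile_append_of_head?_eq_false hCb hhead, ← ih.1 hrest]
    · rintro rfl
      obtain ⟨x, r', hxr⟩ := exists_cons_of_ne_nil h
      have hx : b x = true := by
        have := head?_dropWhile_not (!b ·) l
        rw [← hr, hxr] at this
        simpa using this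
      have hrest := ih.2 rfl
      refine isAltSplit_cons_cons_iff.2 ⟨?_, fun y hy => by simpa using mem_takeWhile_imp hy,
        by simp [hxr, hx], fun y hy => mem_takeWhile_imp hy, ?_, hrest.2.1 ▸ hrest⟩
      · rw [← hrest.2.1, append_assoc, takeWhile_append_dropWhile, takeWhile_append_dropWhile]
      · intro y hy
        rw [← hrest.2.1] at hy
        simpa [Option.mem_def.1 hy] using head?_dropWhile_not b r

end AltSplit

namespace SimpleGraph.Walk

variable {V : Type*} {G : SimpleGraph V}

theorem IsPath.start_notMem_of_mem_edges_tail {u v : V} {p : G.Walk u v} (hp : p.IsPath)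
    {f : Sym2 V} (hf : f ∈ p.edges.tail) : u ∉ f := by
  cases p with
  | nil => simp at hf
  | cons h q =>
    rintro hu
    obtain ⟨y, rfl⟩ := Sym2.mem_iff_exists.mp hu
    exact ((cons_isPath_iff h q).1 hp).2 (q.fst_mem_support_of_mem_edges (by simpa using hf))

theorem IsPath.notMem_of_edges_eq_append {u v : V} {p : G.Walk u v} (hp : p.IsPath)
    {l₁ l₂ l₃ : List (Sym2 V)} (h : p.edges = l₁ ++ l₂ ++ l₃) (hl₂ : l₂ ≠ [])
    {e f : Sym2 V} (he : e ∈ l₁) (hf : f ∈ l₃) {x : V} (hxe : x ∈ e) : x ∉ f := by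
  induction p generalizing l₁ with
  | nil => simp_all
  | @cons a c _ hac q ih =>
    obtain ⟨e₀, l₁, rfl⟩ := exists_cons_of_ne_nil (ne_nil_of_mem he)
    rw [edges_cons, List.cons_append, List.cons_append] at h
    obtain ⟨rfl, hq⟩ := List.cons.inj h
    have hq' := ((cons_isPath_iff hac q).1 hp).1
    rcases mem_cons.1 he with rfl | he
    · obtain ⟨y, ys, rfl⟩ := exists_cons_of_ne_nil hl₂
      rcases Sym2.mem_iff.1 hxe with rfl | rfl
      · exact hp.start_notMem_of_mem_edges_tail (by simp [hq, hf])
      · exact hq'.start_notMem_of_mem_edges_tail (by rw [hq]; cases l₁ <;> simp [hf])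
    · exact ih hq' hq he

end SimpleGraph.Walk

theorem Finset.card_filter_range_mod_two_eq_one (n : ℕ) :
    {i ∈ Finset.range n | i % 2 = 1}.card = n / 2 := by
  have : {i ∈ Finset.range n | i % 2 = 1} = (Finset.range (n / 2)).image (2 * · + 1) := by
    ext i
    simp only [Finset.mem_filter, Finset.mem_range, Finset.mem_image]
    exact ⟨fun h => ⟨i / 2, by omega, by omega⟩, by rintro ⟨a, ha, rfl⟩; omega⟩
  rw [this, Finset.card_image_of_injective _ (fun a b h => by simp at h; omega), Finset.card_range]

section IsAltDecomp

variable {V : Type*} {T0 T1 T2 : SimpleGraph V} {u v : V} {p : T2.Walk u v}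
  {L : List (List (Sym2 V))}

theorem isAltDecomp_iff_isAltSplit [DecidablePred (· ∈ T0.edgeSet)]
    (hsub : T2.edgeSet ⊆ T1.edgeSet ∪ T0.edgeSet) :
    IsAltDecomp T0 T1 p L ↔ IsAltSplit (fun e => decide (e ∈ T0.edgeSet)) p.edges L := by
  constructor
  · rintro ⟨hlen, hl, hblocks, hne⟩
    refine ⟨hlen, hl, fun i hi => ?_, hne⟩
    obtain ⟨hodd, heven⟩ := hblocks i hi
    exact ⟨fun h => (hodd h).imp_right fun hT e he => by simpa using hT e he,
      fun h e he => by simpa using (heven h e he).2⟩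
  · rintro ⟨hlen, hl, hblocks, hne⟩
    refine ⟨hlen, hl, fun i hi => ?_, hne⟩
    obtain ⟨hodd, heven⟩ := hblocks i hi
    refine ⟨fun h => (hodd h).imp_right fun hT e he => by simpa using hT e he, fun h e he => ?_⟩
    have heT0 : e ∉ T0.edgeSet := by simpa using heven h e he
    have heT2 : e ∈ T2.edgeSet :=
      p.edges_subset_edgeSet (hl ▸ (getD_nil_sublist_flatten L i).subset he)
    exact ⟨(hsub heT2).resolve_right heT0, heT0⟩

namespace IsAltDecomp

variable (hL : IsAltDecomp T0 T1 p L)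
include hL

theorem biUnion_oddBlocks_subset [Finite V] [DecidableEq V] :
    {i ∈ Finset.range L.length | i % 2 = 1}.biUnion (fun i => (L.getD i []).toFinset) ⊆
      T0.edgeSet.toFinite.toFinset := by
  intro e he
  simp only [Finset.mem_biUnion, Finset.mem_filter, Finset.mem_range, List.mem_toFinset] at he
  obtain ⟨i, ⟨hi, hi2⟩, he⟩ := he
  simpa using ((hL.2.2.1 i hi).1 hi2).2 e he

variable (hp : p.IsPath)
include hp

theorem notMem_of_lt {i j : ℕ} (hij : i < j) (hj : j < L.length) (hi2 : i % 2 = 1)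
    (hj2 : j % 2 = 1) {e f : Sym2 V} (he : e ∈ L.getD i []) (hf : f ∈ L.getD j []) {x : V}
    (hx : x ∈ e) : x ∉ f := by
  obtain ⟨-, hl, -, hne⟩ := hL
  obtain ⟨l₁, l₃, hsplit, h₁, h₃⟩ := exists_flatten_eq_append_getD_append (by omega : i + 1 < j) hj
  exact hp.notMem_of_edges_eq_append (hl.trans hsplit)
    (hne (i + 1) (by omega) (by omega) (by omega)) (h₁ he) (h₃ hf) hx

theorem oddBlocks_vertexDisjoint : ∀ i j, i < L.length → j < L.length → i % 2 = 1 →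
    j % 2 = 1 → i ≠ j → ∀ e ∈ L.getD i [], ∀ f ∈ L.getD j [], ∀ x : V, ¬(x ∈ e ∧ x ∈ f) := by
  rintro i j hi hj hi2 hj2 hij e he f hf x ⟨hxe, hxf⟩
  rcases lt_or_gt_of_ne hij with h | h
  · exact hL.notMem_of_lt hp h hj hi2 hj2 he hf hxe hxf
  · exact hL.notMem_of_lt hp h hi hj2 hi2 hf he hxf hxe

theorem pairwiseDisjoint_oddBlocks [DecidableEq V] :
    (({i ∈ Finset.range L.length | i % 2 = 1} : Finset ℕ) : Set ℕ).PairwiseDisjoint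
      fun i => (L.getD i []).toFinset := by
  intro i hi j hj hij
  simp only [Finset.coe_filter, Finset.mem_range, Set.mem_ofPred_eq] at hi hj
  refine Finset.disjoint_left.2 fun e hei hej => ?_
  exact hL.oddBlocks_vertexDisjoint hp i j hi.1 hj.1 hi.2 hj.2 hij e (by simpa using hei) e
    (by simpa using hej) _ ⟨Sym2.out_fst_mem e, Sym2.out_fst_mem e⟩

theorem length_div_two_le_ncard [Finite V] : L.length / 2 ≤ T0.edgeSet.ncard := by
  classical
  calc L.length / 2 = {i ∈ Finset.range L.length | i % 2 = 1}.card :=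
        (Finset.card_filter_range_mod_two_eq_one _).symm
    _ ≤ ({i ∈ Finset.range L.length | i % 2 = 1}.biUnion fun i => (L.getD i []).toFinset).card :=
        Finset.card_le_card_biUnion (hL.pairwiseDisjoint_oddBlocks hp) fun i hi => by
          simp only [Finset.mem_filter, Finset.mem_range] at hi
          simpa [Finset.nonempty_iff_ne_empty] using ((hL.2.2.1 i hi.1).1 hi.2).1
    _ ≤ T0.edgeSet.toFinite.toFinset.card := Finset.card_le_card hL.biUnion_oddBlocks_subset
    _ = T0.edgeSet.ncard := (Set.ncard_eq_toFinset_card _ _).symm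

theorem sum_oddBlocks_le_wsum [Finite V] (w : Sym2 V → ℝ) (hw : ∀ e, 0 ≤ w e) :
    (∑ i ∈ Finset.range L.length,
      if i % 2 = 1 then ((L.getD i []).map w).sum else 0) ≤ wsum w T0 := by
  classical
  have hnodup (i : ℕ) : (L.getD i []).Nodup :=
    (getD_nil_sublist_flatten L i).nodup (hL.2.1 ▸ hp.isTrail.edges_nodup)
  calc _ = ∑ i ∈ Finset.range L.length with i % 2 = 1, ((L.getD i []).map w).sum :=
        (Finset.sum_filter _ _).symm
    _ = ∑ i ∈ Finset.range L.length with i % 2 = 1, ∑ e ∈ (L.getD i []).toFinset, w e :=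
        Finset.sum_congr rfl fun i _ => (List.sum_toFinset w (hnodup i)).symm
    _ = ∑ e ∈ {i ∈ Finset.range L.length | i % 2 = 1}.biUnion
          (fun i => (L.getD i []).toFinset), w e :=
        (Finset.sum_biUnion (hL.pairwiseDisjoint_oddBlocks hp)).symm
    _ ≤ wsum w T0 :=
        Finset.sum_le_sum_of_subset_of_nonneg hL.biUnion_oddBlocks_subset fun e _ _ => hw e

end IsAltDecomp

end IsAltDecomp

theorem stmt10_general {V : Type*} [Finite V] (w : Sym2 V → ℝ) (hw : ∀ e, 0 ≤ w e)
    (T0 T1 T2 : SimpleGraph V)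
    (hsub : T2.edgeSet ⊆ T1.edgeSet ∪ T0.edgeSet)
    {u v : V} (p : T2.Walk u v) (hp : p.IsPath) :
    (∃! L : List (List (Sym2 V)), IsAltDecomp T0 T1 p L) ∧
    ∀ L : List (List (Sym2 V)), IsAltDecomp T0 T1 p L →
      (∀ i j, i < L.length → j < L.length → i % 2 = 1 → j % 2 = 1 → i ≠ j →
        ∀ e ∈ L.getD i [], ∀ f ∈ L.getD j [], ∀ x : V, ¬(x ∈ e ∧ x ∈ f)) ∧
      L.length / 2 ≤ T0.edgeSet.ncard ∧
      (∑ i ∈ Finset.range L.length,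
        if i % 2 = 1 then ((L.getD i []).map w).sum else 0) ≤ wsum w T0 := by
  classical
  have hdecomp (L : List (List (Sym2 V))) :
      IsAltDecomp T0 T1 p L ↔ L = altSplit (fun e => decide (e ∈ T0.edgeSet)) p.edges :=
    (isAltDecomp_iff_isAltSplit hsub).trans isAltSplit_iff_eq_altSplit
  refine ⟨⟨_, (hdecomp _).2 rfl, fun L hL => (hdecomp L).1 hL⟩, fun L hL => ?_⟩
  exact ⟨hL.oddBlocks_vertexDisjoint hp, hL.length_div_two_le_ncard hp,
    hL.sum_oddBlocks_le_wsum hp w hw⟩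

/-- A path `P` in a tree `T₂` whose edges lie in `E(T₁) ∪ E(T₀)` decomposes uniquely into
edge-disjoint consecutive subpaths `P₀,…,P_{2k}` alternating between `T₁` (even indices)
and `T₀` (odd indices); moreover the odd-indexed subpaths are pairwise vertex-disjoint
subpaths of `T₀`, so `k ≤ |E(T₀)|` and their total weight is at most the weight of `T₀`. -/
theorem stmt10 {V : Type*} [Finite V] (w : Sym2 V → ℝ) (hw : ∀ e, 0 ≤ w e)
    (T0 T1 T2 : SimpleGraph V)
    (hT0 : (T0.induce T0.support).IsTree) (hT1 : T1.IsTree) (hT2 : T2.IsTree)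
    (hsub : T2.edgeSet ⊆ T1.edgeSet ∪ T0.edgeSet)
    {u v : V} (p : T2.Walk u v) (hp : p.IsPath) :
    (∃! L : List (List (Sym2 V)), IsAltDecomp T0 T1 p L) ∧
    ∀ L : List (List (Sym2 V)), IsAltDecomp T0 T1 p L →
      (∀ i j, i < L.length → j < L.length → i % 2 = 1 → j % 2 = 1 → i ≠ j →
        ∀ e ∈ L.getD i [], ∀ f ∈ L.getD j [], ∀ x : V, ¬(x ∈ e ∧ x ∈ f)) ∧
      L.length / 2 ≤ T0.edgeSet.ncard ∧
      (∑ i ∈ Finset.range L.length,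
        if i % 2 = 1 then ((L.getD i []).map w).sum else 0) ≤ wsum w T0 :=
  stmt10_general w hw T0 T1 T2 hsub p hp
end

section
/- For a random graph G(n,p) with n vertices where each edge appears independently with probability p ∈ [0,1], the probability that G(n,p) is not connected is at most exp(n·exp(−np/2)) − 1. -/
/-!
If `G(n,p)` is disconnected, some vertex set `S` with `1 ≤ |S| ≤ n/2` has no edge to its
complement, an event of probability `(1-p)^(|S|(n-|S|)) ≤ exp(-np/2)^|S|`. Together with
`C(n,k) ≤ n^k/k!`, the union bound over `S` gives at most `∑_{k ≥ 1} x^k/k! ≤ exp x - 1`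
for `x = n exp(-np/2)`.
-/

open MeasureTheory

/-- The Erdős–Rényi measure: each potential edge of the complete graph on `Fin n` is
present independently with probability `p`. The random graph associated to
`ω : Sym2 (Fin n) → Bool` is `SimpleGraph.fromEdgeSet {e | ω e = true}`. -/
noncomputable def erdosRenyi (n : ℕ) (p : ℝ) (hp1 : p ≤ 1) :
    Measure (Sym2 (Fin n) → Bool) :=
  Measure.pi fun _ => (PMF.bernoulli (Real.toNNReal p) (Real.toNNReal_le_one.mpr hp1)).toMeasure

open Finset

lemma erdosRenyi_setOf_forall_eq_false (n : ℕ) {p : ℝ} (hp0 : 0 ≤ p) (hp1 : p ≤ 1)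
    (E : Finset (Sym2 (Fin n))) :
    erdosRenyi n p hp1 {ω | ∀ e ∈ E, ω e = false} = ENNReal.ofReal ((1 - p) ^ #E) := by
  have hcyl : {ω : Sym2 (Fin n) → Bool | ∀ e ∈ E, ω e = false}
      = (E : Set (Sym2 (Fin n))).pi fun _ => {false} := by
    ext ω; simp [Set.mem_pi]
  rw [erdosRenyi, hcyl, Measure.pi_pi_finset, prod_const,
    PMF.toMeasure_apply_singleton _ _ (measurableSet_singleton _),
    ENNReal.ofReal_pow (by linarith), ENNReal.ofReal_sub _ hp0, ENNReal.ofReal_one]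
  exact congrArg (· ^ #E) ENNReal.coe_sub

section EdgeBoundary

variable {V : Type*} [Fintype V] [DecidableEq V]

def edgeBoundary (S : Finset V) : Finset (Sym2 V) :=
  (S ×ˢ Sᶜ).image fun q => s(q.1, q.2)

lemma card_edgeBoundary (S : Finset V) : #(edgeBoundary S) = #S * #Sᶜ := by
  rw [edgeBoundary, card_image_of_injOn, card_product]
  rintro ⟨a, b⟩ hab ⟨c, d⟩ hcd h
  simp only [coe_product, Set.mem_prod, mem_coe, mem_compl] at hab hcd
  rcases Sym2.eq_iff.mp h with ⟨rfl, rfl⟩ | ⟨rfl, rfl⟩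
  · rfl
  · exact absurd hab.1 hcd.2

lemma eq_false_of_mem_edgeBoundary {ω : Sym2 V → Bool} {S : Finset V}
    (hS : ∀ a ∈ S, ∀ b ∉ S, ¬ (SimpleGraph.fromEdgeSet {e | ω e = true}).Adj a b)
    {e : Sym2 V} (he : e ∈ edgeBoundary S) : ω e = false := by
  simp only [edgeBoundary, mem_image, mem_product, mem_compl] at he
  obtain ⟨⟨a, b⟩, ⟨ha, hb⟩, rfl⟩ := he
  have hab : a ≠ b := by rintro rfl; exact hb ha
  simpa [hab] using hS a ha b hb

end EdgeBoundary

lemma SimpleGraph.exists_finset_card_le_half_of_not_connected {V : Type*} [Fintype V]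
    [Nonempty V] {G : SimpleGraph V} (hG : ¬ G.Connected) :
    ∃ S : Finset V, 0 < #S ∧ #S ≤ Fintype.card V / 2 ∧ ∀ a ∈ S, ∀ b ∉ S, ¬ G.Adj a b := by
  classical
  obtain ⟨u, v, huv⟩ : ∃ u v, ¬ G.Reachable u v := by
    simpa [SimpleGraph.connected_iff, SimpleGraph.Preconnected] using hG
  set T := univ.filter (G.Reachable u)
  have hT : ∀ a ∈ T, ∀ b ∉ T, ¬ G.Adj a b := by
    intro a ha b hb hab
    simp only [T, mem_filter, mem_univ, true_and] at ha hb
    exact hb (ha.trans hab.reachable)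
  have hTc : ∀ a ∈ Tᶜ, ∀ b ∉ Tᶜ, ¬ G.Adj a b := fun a ha b hb hab =>
    hT b (notMem_compl.mp hb) a (mem_compl.mp ha) hab.symm
  have hu : u ∈ T := by simp [T]
  have hv : v ∈ Tᶜ := by simpa [T] using huv
  have hcard := card_add_card_compl T
  by_cases hsmall : #T ≤ Fintype.card V / 2
  · exact ⟨T, card_pos.mpr ⟨u, hu⟩, hsmall, hT⟩
  · exact ⟨Tᶜ, card_pos.mpr ⟨v, hv⟩, by omega, hTc⟩

lemma setOf_not_connected_subset_iUnion {V : Type*} [Fintype V] [DecidableEq V] [Nonempty V] :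
    {ω : Sym2 V → Bool | ¬ (SimpleGraph.fromEdgeSet {e | ω e = true}).Connected}
      ⊆ ⋃ k ∈ Icc 1 (Fintype.card V / 2), ⋃ S ∈ powersetCard k (univ : Finset V),
          {ω | ∀ e ∈ edgeBoundary S, ω e = false} := by
  intro ω hω
  obtain ⟨S, hS0, hSn, hS⟩ := SimpleGraph.exists_finset_card_le_half_of_not_connected hω
  simp only [Set.mem_iUnion, mem_Icc, mem_powersetCard_univ, exists_prop]
  exact ⟨#S, ⟨hS0, hSn⟩, S, rfl, fun e => eq_false_of_mem_edgeBoundary hS⟩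

lemma sum_powersetCard_erdosRenyi_setOf_forall_eq_false (n k : ℕ) {p : ℝ} (hp0 : 0 ≤ p)
    (hp1 : p ≤ 1) :
    ∑ S ∈ powersetCard k (univ : Finset (Fin n)),
        erdosRenyi n p hp1 {ω | ∀ e ∈ edgeBoundary S, ω e = false}
      = ENNReal.ofReal (n.choose k * (1 - p) ^ (k * (n - k))) := by
  have hS : ∀ S ∈ powersetCard k (univ : Finset (Fin n)),
      erdosRenyi n p hp1 {ω | ∀ e ∈ edgeBoundary S, ω e = false}
        = ENNReal.ofReal ((1 - p) ^ (k * (n - k))) := by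
    intro S hS
    rw [erdosRenyi_setOf_forall_eq_false n hp0 hp1, card_edgeBoundary, card_compl,
      Fintype.card_fin, mem_powersetCard_univ.mp hS]
  rw [sum_congr rfl hS, sum_const, card_powersetCard, card_univ, Fintype.card_fin,
    nsmul_eq_mul, ENNReal.ofReal_mul (by positivity), ENNReal.ofReal_natCast]

lemma one_sub_pow_le_exp_pow {p : ℝ} (hp0 : 0 ≤ p) (hp1 : p ≤ 1) {n k : ℕ} (hk : 2 * k ≤ n) :
    (1 - p) ^ (k * (n - k)) ≤ Real.exp (-(n * p) / 2) ^ k := by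
  have hexp : (1 - p) ^ (k * (n - k)) ≤ Real.exp (-p) ^ (k * (n - k)) :=
    pow_le_pow_left₀ (by linarith) (by linarith [Real.add_one_le_exp (-p)]) _
  refine hexp.trans ?_
  rw [← Real.exp_nat_mul, ← Real.exp_nat_mul, Real.exp_le_exp, Nat.cast_mul,
    Nat.cast_sub (by omega)]
  have : (2 * k : ℝ) ≤ n := by exact_mod_cast hk
  nlinarith [mul_nonneg (Nat.cast_nonneg k) hp0]

lemma Real.sum_Icc_pow_div_factorial_le_exp_sub_one {x : ℝ} (hx : 0 ≤ x) (m : ℕ) :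
    ∑ k ∈ Icc 1 m, x ^ k / k.factorial ≤ Real.exp x - 1 := by
  have h := Real.sum_le_exp_of_nonneg hx (m + 1)
  rw [range_eq_Ico, sum_eq_sum_Ico_succ_bot (Nat.succ_pos _)] at h
  simp only [pow_zero, Nat.factorial_zero, Nat.cast_one, div_one, zero_add,
    Nat.succ_eq_add_one, Ico_add_one_right_eq_Icc] at h
  linarith

lemma sum_choose_mul_one_sub_pow_le {p : ℝ} (hp0 : 0 ≤ p) (hp1 : p ≤ 1) (n : ℕ) :
    ∑ k ∈ Icc 1 (n / 2), (n.choose k : ℝ) * (1 - p) ^ (k * (n - k))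
      ≤ Real.exp (n * Real.exp (-(n * p) / 2)) - 1 := by
  refine le_trans (sum_le_sum fun k hk => ?_)
    (Real.sum_Icc_pow_div_factorial_le_exp_sub_one (by positivity) (n / 2))
  have hk : 2 * k ≤ n := by rw [mem_Icc] at hk; omega
  calc (n.choose k : ℝ) * (1 - p) ^ (k * (n - k))
      ≤ (n ^ k / k.factorial) * Real.exp (-(n * p) / 2) ^ k :=
        mul_le_mul (Nat.choose_le_pow_div k n) (one_sub_pow_le_exp_pow hp0 hp1 hk)
          (pow_nonneg (by linarith) _) (by positivity)
    _ = (n * Real.exp (-(n * p) / 2)) ^ k / k.factorial := by ring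

/-- The probability that `G(n,p)` is not connected is at most `exp(n·exp(−np/2)) − 1`. -/
theorem stmt11 (n : ℕ) (hn : 1 ≤ n) (p : ℝ) (hp0 : 0 ≤ p) (hp1 : p ≤ 1) :
    erdosRenyi n p hp1
        {ω : Sym2 (Fin n) → Bool | ¬ (SimpleGraph.fromEdgeSet {e | ω e = true}).Connected}
      ≤ ENNReal.ofReal (Real.exp (n * Real.exp (-(n * p) / 2)) - 1) := by
  have : Nonempty (Fin n) := ⟨⟨0, hn⟩⟩
  have hsub := setOf_not_connected_subset_iUnion (V := Fin n)
  rw [Fintype.card_fin] at hsub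
  calc _ ≤ ∑ k ∈ Icc 1 (n / 2), ∑ S ∈ powersetCard k (univ : Finset (Fin n)),
        erdosRenyi n p hp1 {ω | ∀ e ∈ edgeBoundary S, ω e = false} :=
        (measure_mono hsub).trans <| (measure_biUnion_finset_le _ _).trans <|
          sum_le_sum fun k _ => measure_biUnion_finset_le _ _
    _ = ENNReal.ofReal (∑ k ∈ Icc 1 (n / 2), (n.choose k : ℝ) * (1 - p) ^ (k * (n - k))) := by
        rw [ENNReal.ofReal_sum_of_nonneg fun k _ => by positivity]
        exact sum_congr rfl fun k _ =>
          sum_powersetCard_erdosRenyi_setOf_forall_eq_false n k hp0 hp1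
    _ ≤ _ := ENNReal.ofReal_le_ofReal (sum_choose_mul_one_sub_pow_le hp0 hp1 n)
end
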